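/- Conjugacy of two d-dimensional SFTs is a recursively enumerable (Σ⁰₁) property: the set of pairs (X, Y) of SFTs (given by their finite lists of forbidden patterns) that are topologically conjugate is Σ⁰₁ in the arithmetical hierarchy. -/

import Mathlib

/-!
A conjugacy is given by two local rules, and on configurations over a finite alphabet a local
rule is a finite table. By shift invariance, two rules `f`, `g` give mutually inverse conjugacies
between the SFTs `X` and `Y` iff a condition at the origin holds on `X` (the image under `f`
satisfies the constraints of `Y` there and `g ∘ f` returns the central symbol), together with
the symmetric condition on `Y`. This condition is local, and by compactness a local condition
holds on an SFT iff it holds on all admissible blocks of some finite radius. These blocks can be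
listed, so conjugacy is the existence of a witness (radius, block radius, two tables) passing a
primitive recursive check.
-/

open Filter Topology

/-- Positions: `ℤ^d`. -/
abbrev Zd (d : ℕ) : Type := Fin d → ℤ

/-- Configurations: maps `ℤ^d → A`. -/
abbrev Config (d : ℕ) (A : Type*) : Type _ := Zd d → A

/-- The block `[-r,r]^d` in `ℤ^d`. -/
noncomputable def ball (d r : ℕ) : Finset (Zd d) :=
  Fintype.piFinset fun _ => Finset.Icc (-(r : ℤ)) (r : ℤ)

/-- A pattern: a finite support together with a symbol at each position. -/
structure Pattern (d : ℕ) (A : Type*) where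
  supp : Finset (Zd d)
  val : Zd d → A

variable {d : ℕ} {A B : Type*}

/-- The pattern `p` occurs in the configuration `x` at position `z`. -/
def Pattern.OccursAt (p : Pattern d A) (x : Config d A) (z : Zd d) : Prop :=
  ∀ v ∈ p.supp, x (z + v) = p.val v

/-- The pattern `q` occurs inside the pattern `p` at position `z`. -/
def Pattern.OccursIn (q p : Pattern d A) (z : Zd d) : Prop :=
  ∀ v ∈ q.supp, z + v ∈ p.supp ∧ p.val (z + v) = q.val v

/-- The subshift defined by the set `F` of forbidden patterns. -/
def xF (F : Set (Pattern d A)) : Set (Config d A) :=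
  {x | ∀ z : Zd d, ∀ p ∈ F, ¬ p.OccursAt x z}

/-- A pattern is admissible if no forbidden pattern occurs inside it. -/
def Admissible (F : Set (Pattern d A)) (p : Pattern d A) : Prop :=
  ∀ z : Zd d, ∀ q ∈ F, ¬ q.OccursIn p z

/-- A pattern is extensible if it occurs in some configuration of the subshift. -/
def Extensible (F : Set (Pattern d A)) (p : Pattern d A) : Prop :=
  ∃ x ∈ xF F, ∃ z : Zd d, p.OccursAt x z

/-- The shift map by `v`. -/
def shift (v : Zd d) (x : Config d A) : Config d A := fun z => x (z + v)

/-- `f` is a local rule of radius `r`: it only depends on coordinates in `[-r,r]^d`. -/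
def IsLocal (r : ℕ) (f : Config d A → B) : Prop :=
  ∀ u u' : Config d A, (∀ v ∈ ball d r, u v = u' v) → f u = f u'

/-- The global sliding-block code induced by the local rule `f`. -/
def sliding (f : Config d A → B) : Config d A → Config d B :=
  fun x z => f fun v => x (z + v)

/-- `X` and `Y` are topologically conjugate via mutually inverse sliding-block codes. -/
def Conj (X : Set (Config d A)) (Y : Set (Config d B)) : Prop :=
  ∃ (r : ℕ) (f : Config d A → B) (g : Config d B → A),
    IsLocal r f ∧ IsLocal r g ∧ sliding f '' X = Y ∧
    (∀ x ∈ X, sliding g (sliding f x) = x) ∧ (∀ y ∈ Y, sliding f (sliding g y) = y)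

/-- Code for a pattern over alphabet `ℕ`: a list of (position, symbol) pairs. -/
abbrev PatternCode : Type := List (List ℤ × ℕ)

/-- Code for an SFT: alphabet size and a finite list of forbidden pattern codes. -/
abbrev SFTCode : Type := ℕ × List PatternCode

def decodePos (d : ℕ) (l : List ℤ) : Zd d := fun i => l.getD i 0

def decodePattern (d : ℕ) (c : PatternCode) : Pattern d ℕ :=
  ⟨(c.map fun q => decodePos d q.1).toFinset,
   fun z => ((c.find? fun q => decide (decodePos d q.1 = z)).map Prod.snd).getD 0⟩

/-- The SFT coded by `c`: configurations with symbols `< c.1` avoiding all decoded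
forbidden patterns. -/
def codeSFT (d : ℕ) (c : SFTCode) : Set (Config d ℕ) :=
  {x | (∀ z : Zd d, x z < c.1) ∧
    ∀ z : Zd d, ∀ pc ∈ c.2, ¬ (decodePattern d pc).OccursAt x z}

/-- A set of codes is `Σ⁰₁` (recursively enumerable). -/
def Sigma01 {α : Type} [Primcodable α] (S : Set α) : Prop :=
  ∃ R : α × ℕ → Bool, Computable R ∧ ∀ a, a ∈ S ↔ ∃ w : ℕ, R (a, w) = true

/-! ### Computability -/

namespace Primrec

theorem int_equivNatSumNat : Primrec Equiv.intEquivNatSumNat :=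
  Primrec.encode_iff.1 (Primrec.encode.of_eq fun z => by cases z <;> rfl)

theorem int_equivNatSumNat_symm : Primrec Equiv.intEquivNatSumNat.symm :=
  Primrec.encode_iff.1 (Primrec.encode.of_eq fun s => by rcases s with n | n <;> rfl)

theorem int_toNat : Primrec Int.toNat :=
  (sumCasesOn int_equivNatSumNat Primrec₂.right (const 0).to₂).of_eq fun z => by cases z <;> rfl

theorem int_neg_toNat : Primrec fun z : ℤ => (-z).toNat :=
  (sumCasesOn int_equivNatSumNat (const 0).to₂ (succ.comp₂ Primrec₂.right)).of_eq fun z => by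
    rcases z with (_ | n) | n <;> rfl

theorem int_subNatNat : Primrec₂ Int.subNatNat := by
  refine (int_equivNatSumNat_symm.comp (Primrec.ite (nat_le.comp snd fst)
    (sumInl.comp (nat_sub.comp fst snd))
    (sumInr.comp (nat_sub.comp (nat_sub.comp snd fst) (const 1))))).of_eq fun p => ?_
  obtain ⟨m, n⟩ := p
  by_cases h : n ≤ m
  · rw [if_pos h, Int.subNatNat_of_le h]; rfl
  · rw [if_neg h, Int.subNatNat_of_lt (not_le.1 h), Nat.pred_eq_sub_one]; rfl

theorem int_add : Primrec₂ ((· + ·) : ℤ → ℤ → ℤ) :=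
  (int_subNatNat.comp₂
    (nat_add.comp₂ (int_toNat.comp₂ Primrec₂.left) (int_toNat.comp₂ Primrec₂.right))
    (nat_add.comp₂ (int_neg_toNat.comp₂ Primrec₂.left) (int_neg_toNat.comp₂ Primrec₂.right))).of_eq
    fun z w => by rw [Int.subNatNat_eq_coe]; push_cast; omega

theorem int_natAbs : Primrec Int.natAbs :=
  (nat_add.comp int_toNat int_neg_toNat).of_eq fun z => by omega

theorem pi_int_add {n : ℕ} : Primrec₂ ((· + ·) : (Fin n → ℤ) → (Fin n → ℤ) → Fin n → ℤ) :=
  (fin_curry.2 (int_add.comp (fin_app.comp (fst.comp fst) snd)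
    (fin_app.comp (snd.comp fst) snd)).to₂).of_eq fun _ => rfl

end Primrec

open Primrec

section Computability

variable {α β : Type} [Primcodable α] [Primcodable β]

theorem sigma01_of_primrecRel {S : Set α} {p : α → β → Prop} (hp : PrimrecRel p)
    (hS : ∀ a, a ∈ S ↔ ∃ w, p a w) : Sigma01 S := by
  obtain ⟨inst, hdec⟩ := hp
  let R : α × ℕ → Bool := fun q =>
    ((Encodable.decode (α := β) q.2).map fun w => @decide (p q.1 w) (inst (q.1, w))).getD false
  have hR : Primrec R := option_getD.comp
    (option_map (Primrec.decode.comp snd) (hdec.comp ((fst.comp fst).pair snd)).to₂) (const false)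
  refine ⟨R, hR.to_comp, fun a => (hS a).trans ⟨fun ⟨w, hw⟩ => ⟨Encodable.encode w, ?_⟩, ?_⟩⟩
  · simpa [R, Encodable.encodek] using hw
  · rintro ⟨n, hn⟩
    cases h : Encodable.decode (α := β) n with
    | none => simp [R, h] at hn
    | some w => exact ⟨w, by simpa [R, h] using hn⟩

theorem PrimrecPred.forall_mem {L : α → List β} {p : α × β → Prop} (hL : Primrec L)
    (hp : PrimrecPred p) : PrimrecPred fun a => ∀ b ∈ L a, p (a, b) :=
  hp.primrecRel.swap.forall_mem_list.comp hL Primrec.id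

theorem PrimrecPred.imp {p q : α → Prop} (hp : PrimrecPred p) (hq : PrimrecPred q) :
    PrimrecPred fun a => p a → q a :=
  (hp.not.or hq).of_eq fun _ => imp_iff_not_or.symm

theorem Primrec.list_mem [DecidableEq β] : PrimrecRel fun (b : β) (L : List β) => b ∈ L :=
  (Primrec.eq.exists_mem_list.swap).of_eq fun _ _ => by simp

end Computability

/-! ### Balls, blocks and tables -/

def words (n : ℕ) : ℕ → List (List ℕ)
  | 0 => [[]]
  | L + 1 => (words n L).flatMap fun w => (List.range n).map (· :: w)

theorem mem_words {n L : ℕ} {w : List ℕ} : w ∈ words n L ↔ w.length = L ∧ ∀ a ∈ w, a < n := by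
  induction L generalizing w with
  | zero => simp +contextual [words, List.length_eq_zero_iff]
  | succ L ih =>
    cases w with
    | nil => simp [words]
    | cons a w => simp [words, ih, and_comm, and_assoc, and_left_comm]

theorem primrec_words : Primrec₂ words := by
  have step : Primrec₂ fun (p : ℕ × ℕ) (q : ℕ × List (List ℕ)) =>
      q.2.flatMap fun w => (List.range p.1).map (· :: w) :=
    list_flatMap (snd.comp snd) <| list_map (list_range.comp (fst.comp (fst.comp fst))) <|
      list_cons.comp₂ Primrec₂.right (snd.comp Primrec₂.left)
  refine (nat_rec' snd (const [[]]) step).of_eq fun p => ?_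
  obtain ⟨n, L⟩ := p
  induction L with
  | zero => rfl
  | succ L ih => simp only [words, ← ih]

theorem mem_ball_iff {k : ℕ} {z : Zd d} : z ∈ ball d k ↔ ∀ i, (z i).natAbs ≤ k := by
  simp only [ball, Fintype.mem_piFinset, Finset.mem_Icc]
  exact forall_congr' fun i => by omega

theorem ball_mono {j k : ℕ} (h : j ≤ k) : ball d j ⊆ ball d k := fun _ hz =>
  mem_ball_iff.2 fun i => (mem_ball_iff.1 hz i).trans h

theorem add_mem_ball {j k : ℕ} {z v : Zd d} (hz : z ∈ ball d j) (hv : v ∈ ball d k) :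
    z + v ∈ ball d (j + k) :=
  mem_ball_iff.2 fun i => (Int.natAbs_add_le _ _).trans
    (add_le_add (mem_ball_iff.1 hz i) (mem_ball_iff.1 hv i))

theorem neg_mem_ball {m : ℕ} {v : Zd d} (hv : v ∈ ball d m) : -v ∈ ball d m :=
  mem_ball_iff.2 fun i => by simpa using mem_ball_iff.1 hv i

theorem zero_mem_ball (d k : ℕ) : (0 : Zd d) ∈ ball d k :=
  mem_ball_iff.2 fun _ => Nat.zero_le _

theorem exists_subset_ball (s : Finset (Zd d)) : ∃ k, s ⊆ ball d k :=
  ⟨s.sup fun z => Finset.univ.sup fun i => (z i).natAbs, fun x hx => mem_ball_iff.2 fun i =>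
    (Finset.le_sup (f := fun i => (x i).natAbs) (Finset.mem_univ i)).trans
      (Finset.le_sup (f := fun z => Finset.univ.sup fun i => (z i).natAbs) hx)⟩

def boxList (d k : ℕ) : List (Zd d) :=
  (words (2 * k + 1) d).map fun w i => Int.subNatNat (w.getD i 0) k

theorem mem_boxList {k : ℕ} {z : Zd d} : z ∈ boxList d k ↔ z ∈ ball d k := by
  simp only [boxList, List.mem_map, mem_words, mem_ball_iff]
  constructor
  · rintro ⟨w, ⟨-, hw⟩, rfl⟩ i
    have : w.getD i 0 < 2 * k + 1 := by
      rcases lt_or_ge (i : ℕ) w.length with hi | hi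
      · exact List.getD_eq_getElem _ _ hi ▸ hw _ (List.getElem_mem hi)
      · rw [List.getD_eq_default _ _ hi]; omega
    show (Int.subNatNat _ k).natAbs ≤ k
    rw [Int.subNatNat_eq_coe]; omega
  · intro hz
    refine ⟨List.ofFn fun i => (z i + k).toNat, ⟨by simp, ?_⟩, funext fun i => ?_⟩
    · simp only [List.mem_ofFn, forall_exists_index]
      rintro _ i rfl
      have := hz i; omega
    · rw [List.getD_eq_getElem _ _ (by simp), List.getElem_ofFn, Int.subNatNat_eq_coe, Fin.eta]
      have := hz i; omega

theorem primrec_boxList (d : ℕ) : Primrec (boxList d) :=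
  list_map (primrec_words.comp (succ.comp (nat_mul.comp (const 2) Primrec.id)) (const d)) <|
    (fin_curry.2 (int_subNatNat.comp ((list_getD 0).comp (snd.comp fst) (fin_val.comp snd))
      (fst.comp fst)).to₂)

theorem primrec_decodePos (d : ℕ) : Primrec (decodePos d) :=
  fin_curry.2 <| (list_getD 0).comp fst (fin_val.comp snd)

theorem List.getD_map_idxOf {α β : Type*} [BEq α] [LawfulBEq α] {l : List α} {a : α} (h : a ∈ l)
    (f : α → β) (b : β) : (l.map f).getD (l.idxOf a) b = f a := by
  rw [List.getD_eq_getElem _ _ (by simpa using List.idxOf_lt_length_of_mem h), List.getElem_map,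
    List.getElem_idxOf]

/-- A block of radius `k` is stored as the list of its values along `boxList d k`. -/
def blockConfig (d k : ℕ) (b : List ℕ) : Config d ℕ := fun z => b.getD ((boxList d k).idxOf z) 0

def window (d k : ℕ) (x : Config d ℕ) : List ℕ := (boxList d k).map x

theorem blockConfig_window {k : ℕ} {x : Config d ℕ} {z : Zd d} (hz : z ∈ ball d k) :
    blockConfig d k (window d k x) z = x z :=
  List.getD_map_idxOf (mem_boxList.2 hz) x 0

theorem window_mem_words {k n : ℕ} {x : Config d ℕ} (hx : ∀ z ∈ ball d k, x z < n) :
    window d k x ∈ words n (boxList d k).length := by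
  simp only [mem_words, window, List.length_map, List.mem_map, true_and]
  rintro _ ⟨z, hz, rfl⟩
  exact hx z (mem_boxList.1 hz)

theorem window_congr {k : ℕ} {x x' : Config d ℕ} (h : ∀ z ∈ ball d k, x z = x' z) :
    window d k x = window d k x' :=
  List.map_congr_left fun z hz => h z (mem_boxList.1 hz)

theorem blockConfig_lt {k n : ℕ} {b : List ℕ} (hb : b ∈ words n (boxList d k).length)
    (z : Zd d) : blockConfig d k b z < n := by
  obtain ⟨hlen, hlt⟩ := mem_words.1 hb
  have hpos : 0 < b.length := hlen ▸ List.length_pos_of_mem (mem_boxList.2 (zero_mem_ball d k))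
  rcases lt_or_ge ((boxList d k).idxOf z) b.length with hi | hi
  · rw [blockConfig, List.getD_eq_getElem _ _ hi]
    exact hlt _ (List.getElem_mem hi)
  · rw [blockConfig, List.getD_eq_default _ _ hi]
    exact (Nat.zero_le _).trans_lt (hlt _ (List.getElem_mem hpos))

/-- A table lists the values of a local rule of radius `r` on the windows
`words n (boxList d r).length`, in this order. -/
def tableRule (d r n : ℕ) (t : List ℕ) (u : Config d ℕ) : ℕ :=
  t.getD ((words n (boxList d r).length).idxOf (window d r u)) 0

def ruleTable (d r n : ℕ) (f : Config d ℕ → ℕ) : List ℕ :=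
  (words n (boxList d r).length).map fun w => f (blockConfig d r w)

theorem isLocal_tableRule (r n : ℕ) (t : List ℕ) : IsLocal r (tableRule d r n t) :=
  fun _ _ h => by rw [tableRule, tableRule, window_congr h]

theorem tableRule_ruleTable {r n : ℕ} {f : Config d ℕ → ℕ} (hf : IsLocal r f) {u : Config d ℕ}
    (hu : ∀ v ∈ ball d r, u v < n) : tableRule d r n (ruleTable d r n f) u = f u := by
  rw [tableRule, ruleTable, List.getD_map_idxOf (window_mem_words hu)]
  exact hf _ _ fun v hv => blockConfig_window hv

theorem sliding_tableRule_ruleTable {r n : ℕ} {f : Config d ℕ → ℕ} (hf : IsLocal r f)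
    {x : Config d ℕ} (hx : ∀ z, x z < n) :
    sliding (tableRule d r n (ruleTable d r n f)) x = sliding f x :=
  funext fun _ => tableRule_ruleTable hf fun _ _ => hx _

/-! ### Shifts, locality and conjugacy -/

theorem sliding_apply (f : Config d A → B) (x : Config d A) (z : Zd d) :
    sliding f x z = f (shift z x) := by
  unfold sliding shift; simp only [add_comm z]

theorem shift_zero (x : Config d A) : shift 0 x = x := by
  funext v; simp [shift]

theorem shift_shift (z w : Zd d) (x : Config d A) : shift w (shift z x) = shift (w + z) x := by
  funext v; simp only [shift, add_assoc]

theorem sliding_shift (f : Config d A → B) (z : Zd d) (x : Config d A) :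
    sliding f (shift z x) = shift z (sliding f x) := by
  funext v; simp only [sliding, shift, add_right_comm]

theorem Pattern.occursAt_shift (p : Pattern d A) (x : Config d A) (z w : Zd d) :
    p.OccursAt (shift z x) w ↔ p.OccursAt x (w + z) := by
  simp only [Pattern.OccursAt, shift, add_right_comm]

theorem Pattern.occursAt_congr {p : Pattern d A} {x x' : Config d A} {z : Zd d}
    (h : ∀ v ∈ p.supp, x (z + v) = x' (z + v)) : p.OccursAt x z ↔ p.OccursAt x' z :=
  forall₂_congr fun v hv => by rw [h v hv]

theorem IsLocal.mono {r R : ℕ} {f : Config d A → B} (hf : IsLocal r f) (h : r ≤ R) :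
    IsLocal R f :=
  fun u u' hu => hf u u' fun v hv => hu v (ball_mono h hv)

theorem IsLocal.comp₂ {C D : Type*} {R : ℕ} {f : Config d A → B} {g : Config d A → C}
    (hf : IsLocal R f) (hg : IsLocal R g) (op : B → C → D) : IsLocal R fun x => op (f x) (g x) :=
  fun u u' hu => by simp only [hf u u' hu, hg u u' hu]

theorem IsLocal.comp_sliding {C : Type*} {r R : ℕ} {P : Config d B → C} {f : Config d A → B}
    (hP : IsLocal R P) (hf : IsLocal r f) : IsLocal (R + r) fun x => P (sliding f x) :=
  fun _ _ hu => hP _ _ fun _ hv => hf _ _ fun _ hw => hu _ (add_mem_ball hv hw)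

theorem isLocal_eval_zero : IsLocal 0 fun x : Config d A => x 0 :=
  fun _ _ hu => hu 0 (zero_mem_ball d 0)

theorem conj_iff_invOn {X : Set (Config d A)} {Y : Set (Config d B)} :
    Conj X Y ↔ ∃ r f g, IsLocal r f ∧ IsLocal r g ∧ Set.MapsTo (sliding f) X Y ∧
      Set.MapsTo (sliding g) Y X ∧ Set.InvOn (sliding g) (sliding f) X Y := by
  constructor
  · rintro ⟨r, f, g, hf, hg, himg, hgf, hfg⟩
    refine ⟨r, f, g, hf, hg, himg ▸ Set.mapsTo_image _ _, ?_, fun x hx => hgf x hx,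
      fun y hy => hfg y hy⟩
    rintro _ hy
    obtain ⟨x, hx, rfl⟩ := himg.symm ▸ hy
    rwa [hgf x hx]
  · rintro ⟨r, f, g, hf, hg, hXY, hYX, hinv⟩
    exact ⟨r, f, g, hf, hg, (hinv.bijOn hXY hYX).image_eq, fun x hx => hinv.1 hx,
      fun y hy => hinv.2 hy⟩

def LocallyIn (c : SFTCode) (y : Config d ℕ) : Prop :=
  y 0 < c.1 ∧ ∀ pc ∈ c.2, ¬ (decodePattern d pc).OccursAt y 0

theorem mem_codeSFT_iff {c : SFTCode} {y : Config d ℕ} :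
    y ∈ codeSFT d c ↔ ∀ z, LocallyIn c (shift z y) := by
  simp only [codeSFT, LocallyIn, Set.mem_ofPred_eq, Pattern.occursAt_shift, zero_add, shift,
    forall_and]

theorem shift_mem_codeSFT {c : SFTCode} {y : Config d ℕ} (hy : y ∈ codeSFT d c) (z : Zd d) :
    shift z y ∈ codeSFT d c :=
  mem_codeSFT_iff.2 fun w => shift_shift z w y ▸ mem_codeSFT_iff.1 hy (w + z)

theorem mem_supp_decodePattern {pc : PatternCode} {v : Zd d} :
    v ∈ (decodePattern d pc).supp ↔ ∃ e ∈ pc, decodePos d e.1 = v := by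
  simp [decodePattern]

def codeRadius (c : SFTCode) : ℕ :=
  (c.2.flatMap fun pc => pc.flatMap fun e => e.1.map Int.natAbs).sum

theorem supp_decodePattern_subset {c : SFTCode} {pc : PatternCode} (hpc : pc ∈ c.2) :
    (decodePattern d pc).supp ⊆ ball d (codeRadius c) := by
  intro v hv
  obtain ⟨e, he, rfl⟩ := mem_supp_decodePattern.1 hv
  refine mem_ball_iff.2 fun i => ?_
  rcases lt_or_ge (i : ℕ) e.1.length with hi | hi
  · refine List.le_sum_of_mem ?_
    rw [decodePos, List.getD_eq_getElem _ _ hi]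
    simp only [List.mem_flatMap, List.mem_map]
    exact ⟨pc, hpc, e, he, _, List.getElem_mem hi, rfl⟩
  · rw [decodePos, List.getD_eq_default _ _ hi]
    exact Nat.zero_le _

theorem isLocal_locallyIn (c : SFTCode) : IsLocal (codeRadius c) (LocallyIn (d := d) c) :=
  fun u u' hu => propext <| and_congr (by rw [hu 0 (zero_mem_ball _ _)]) <|
    forall₂_congr fun _ hpc => not_congr <| Pattern.occursAt_congr fun v hv => by
      simpa using hu v (supp_decodePattern_subset hpc hv)

def TransferAt (c : SFTCode) (f g : Config d ℕ → ℕ) (x : Config d ℕ) : Prop :=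
  LocallyIn c (sliding f x) ∧ g (sliding f x) = x 0

theorem isLocal_transferAt (c : SFTCode) {r : ℕ} {f g : Config d ℕ → ℕ} (hf : IsLocal r f)
    (hg : IsLocal r g) : IsLocal (codeRadius c + 2 * r) (TransferAt c f g) :=
  (((isLocal_locallyIn c).comp_sliding hf).mono (by omega)).comp₂
    (((hg.comp_sliding hf).mono (by omega)).comp₂ (isLocal_eval_zero.mono (Nat.zero_le _))
      (· = ·)) (· ∧ ·)

theorem mapsTo_and_leftInvOn_iff {cX cY : SFTCode} {f g : Config d ℕ → ℕ} :
    Set.MapsTo (sliding f) (codeSFT d cX) (codeSFT d cY) ∧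
        Set.LeftInvOn (sliding g) (sliding f) (codeSFT d cX) ↔
      ∀ x ∈ codeSFT d cX, TransferAt cY f g x := by
  constructor
  · rintro ⟨hmaps, hinv⟩ x hx
    refine ⟨shift_zero (sliding f x) ▸ mem_codeSFT_iff.1 (hmaps hx) 0, ?_⟩
    simpa [sliding_apply, shift_zero] using congrFun (hinv hx) 0
  · intro h
    have hshift : ∀ x ∈ codeSFT d cX, ∀ z, TransferAt cY f g (shift z x) :=
      fun x hx z => h _ (shift_mem_codeSFT hx z)
    refine ⟨fun x hx => mem_codeSFT_iff.2 fun z => ?_, fun x hx => funext fun z => ?_⟩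
    · exact sliding_shift f z x ▸ (hshift x hx z).1
    · rw [sliding_apply, ← sliding_shift]
      simpa [shift] using (hshift x hx z).2

theorem conj_codeSFT_iff {cX cY : SFTCode} :
    Conj (codeSFT d cX) (codeSFT d cY) ↔ ∃ r f g, IsLocal r f ∧ IsLocal r g ∧
      (∀ x ∈ codeSFT d cX, TransferAt cY f g x) ∧ ∀ y ∈ codeSFT d cY, TransferAt cX g f y := by
  simp only [conj_iff_invOn, ← mapsTo_and_leftInvOn_iff, Set.InvOn, Set.RightInvOn]
  exact exists_congr fun _ => exists_congr fun _ => exists_congr fun _ => by tauto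

theorem transferAt_tableRule {cX cY : SFTCode} {r : ℕ} {f g : Config d ℕ → ℕ}
    (hf : IsLocal r f) (hg : IsLocal r g) (h : ∀ x ∈ codeSFT d cX, TransferAt cY f g x) :
    ∀ x ∈ codeSFT d cX, TransferAt cY (tableRule d r cX.1 (ruleTable d r cX.1 f))
      (tableRule d r cY.1 (ruleTable d r cY.1 g)) x := by
  intro x hx
  have hfx : sliding f x ∈ codeSFT d cY := (mapsTo_and_leftInvOn_iff.2 h).1 hx
  rw [TransferAt, sliding_tableRule_ruleTable hf hx.1,
    tableRule_ruleTable hg fun v _ => hfx.1 v]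
  exact h x hx

theorem conj_codeSFT_iff_tables {cX cY : SFTCode} :
    Conj (codeSFT d cX) (codeSFT d cY) ↔ ∃ r tF tG,
      (∀ x ∈ codeSFT d cX, TransferAt cY (tableRule d r cX.1 tF) (tableRule d r cY.1 tG) x) ∧
      ∀ y ∈ codeSFT d cY, TransferAt cX (tableRule d r cY.1 tG) (tableRule d r cX.1 tF) y := by
  rw [conj_codeSFT_iff]
  constructor
  · rintro ⟨r, f, g, hf, hg, hX, hY⟩
    exact ⟨r, _, _, transferAt_tableRule hf hg hX, transferAt_tableRule hg hf hY⟩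
  · rintro ⟨r, tF, tG, hX, hY⟩
    exact ⟨r, _, _, isLocal_tableRule r _ tF, isLocal_tableRule r _ tG, hX, hY⟩

theorem admissible_congr {F : Set (Pattern d A)} {s : Finset (Zd d)} {y y' : Config d A}
    (h : ∀ z ∈ s, y z = y' z) : Admissible F ⟨s, y⟩ ↔ Admissible F ⟨s, y'⟩ :=
  forall_congr' fun _ => forall₂_congr fun _ _ => not_congr <| forall₂_congr fun _ _ =>
    and_congr_right fun hs => by simp only [h _ hs]

theorem admissible_of_mem_xF {F : Set (Pattern d A)} {x : Config d A} (hx : x ∈ xF F)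
    (s : Finset (Zd d)) : Admissible F ⟨s, x⟩ :=
  fun z q hq hocc => hx z q hq fun v hv => (hocc v hv).2

theorem admissible_iff_forall_mem_ball {F : Set (Pattern d A)} {k m : ℕ}
    (hF : ∀ q ∈ F, q.supp ⊆ ball d m) {p : Pattern d A} (hp : p.supp ⊆ ball d k) :
    Admissible F p ↔ ∀ z ∈ ball d (k + m), ∀ q ∈ F, ¬ q.OccursIn p z := by
  refine ⟨fun h z _ => h z, fun h z q hq hocc => ?_⟩
  rcases q.supp.eq_empty_or_nonempty with hempty | ⟨v, hv⟩
  · exact h 0 (zero_mem_ball _ _) q hq fun v hv => absurd hv (hempty ▸ Finset.notMem_empty v)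
  · have hz : z = (z + v) + -v := by abel
    exact h z (hz ▸ add_mem_ball (hp (hocc v hv).1) (neg_mem_ball (hF q hq hv))) q hq hocc

/-! ### Compactness -/

section Compactness

variable [TopologicalSpace A] [DiscreteTopology A]

theorem eventually_nhds_forall_eq (x : Config d A) (s : Finset (Zd d)) :
    ∀ᶠ y in 𝓝 x, ∀ v ∈ s, y v = x v :=
  (Filter.eventually_all_finset s).2 fun v _ =>
    (continuous_apply v).continuousAt.preimage_mem_nhds ((isOpen_discrete {x v}).mem_nhds rfl)

/-- If not, admissible counterexamples on balls of unbounded radius have a cluster point in the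
compact set of `S`-valued configurations; it lies in `xF F` and violates `P`. -/
theorem eventually_forall_admissible {S : Set A} (hS : S.Finite) {F : Set (Pattern d A)}
    {P : Config d A → Prop} {R : ℕ} (hP : IsLocal R P) (h : ∀ x ∈ xF F, (∀ z, x z ∈ S) → P x) :
    ∀ᶠ k in atTop, ∀ y : Config d A, (∀ z, y z ∈ S) → Admissible F ⟨ball d k, y⟩ → P y := by
  by_contra hne
  choose k hk y hyS hadm hPy using
    (by simpa [Filter.not_eventually, frequently_atTop] using hne :
      ∀ j, ∃ k, j ≤ k ∧ ∃ y : Config d A, (∀ z, y z ∈ S) ∧ Admissible F ⟨ball d k, y⟩ ∧ ¬ P y)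
  obtain ⟨x, hxS, hx⟩ := (isCompact_univ_pi fun _ => hS.isCompact).exists_mapClusterPt
    (f := atTop) (u := y) (tendsto_principal.2 (.of_forall fun j => Set.mem_univ_pi.2 (hyS j)))
  have hmatch : ∀ (s : Finset (Zd d)) (N : ℕ), ∃ j, N ≤ j ∧ ∀ v ∈ s, y j v = x v := fun s N =>
    ((hx.frequently (eventually_nhds_forall_eq x s)).and_eventually
      (eventually_ge_atTop N)).exists.imp fun _ hj => ⟨hj.2, hj.1⟩
  have hPx : ¬ P x := by
    obtain ⟨j, -, hj⟩ := hmatch (ball d R) 0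
    exact hP (y j) x hj ▸ hPy j
  refine hPx (h x (fun z q hq hocc => ?_) fun z => Set.mem_univ_pi.1 hxS z)
  obtain ⟨N, hN⟩ := exists_subset_ball (q.supp.image (z + ·))
  obtain ⟨j, hjN, hj⟩ := hmatch (q.supp.image (z + ·)) N
  refine hadm j z q hq fun v hv => ?_
  have hzv := Finset.mem_image_of_mem (z + ·) hv
  exact ⟨ball_mono (hjN.trans (hk j)) (hN hzv), (hj _ hzv).trans (hocc v hv)⟩

end Compactness

section BlockCheck

def forbidden (d : ℕ) (c : SFTCode) : Set (Pattern d ℕ) := {p | ∃ pc ∈ c.2, decodePattern d pc = p}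

theorem mem_xF_forbidden {c : SFTCode} {x : Config d ℕ} :
    x ∈ xF (forbidden d c) ↔ ∀ z, ∀ pc ∈ c.2, ¬ (decodePattern d pc).OccursAt x z := by
  simp [xF, forbidden]

noncomputable def blockPattern (d k : ℕ) (b : List ℕ) : Pattern d ℕ := ⟨ball d k, blockConfig d k b⟩

def BlockCheck (d : ℕ) (c : SFTCode) (P : Config d ℕ → Prop) (k : ℕ) : Prop :=
  ∀ b ∈ words c.1 (boxList d k).length,
    Admissible (forbidden d c) (blockPattern d k b) → P (blockConfig d k b)

variable {c : SFTCode} {P : Config d ℕ → Prop} {R k : ℕ}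

theorem blockCheck_iff (hP : IsLocal R P) (hk : R ≤ k) :
    BlockCheck d c P k ↔
      ∀ y : Config d ℕ, (∀ z, y z < c.1) → Admissible (forbidden d c) ⟨ball d k, y⟩ → P y := by
  refine ⟨fun h y hy hadm => ?_, fun h b hb => h _ (blockConfig_lt hb)⟩
  have hagree : ∀ z ∈ ball d k, blockConfig d k (window d k y) z = y z :=
    fun _ hz => blockConfig_window hz
  have := h _ (window_mem_words fun z _ => hy z) ((admissible_congr hagree).2 hadm)
  rwa [hP _ _ fun v hv => hagree v (ball_mono hk hv)] at this

theorem BlockCheck.forall_codeSFT (hP : IsLocal R P) (hk : R ≤ k) (h : BlockCheck d c P k) :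
    ∀ x ∈ codeSFT d c, P x :=
  fun x hx => (blockCheck_iff hP hk).1 h x hx.1 <|
    admissible_of_mem_xF (mem_xF_forbidden.2 hx.2) _

theorem eventually_blockCheck (hP : IsLocal R P) (h : ∀ x ∈ codeSFT d c, P x) :
    ∀ᶠ k in atTop, BlockCheck d c P k :=
  ((eventually_forall_admissible (Set.finite_Iio c.1) hP fun x hxF hxS =>
    h x ⟨hxS, mem_xF_forbidden.1 hxF⟩).and (eventually_ge_atTop R)).mono
    fun _ hk => (blockCheck_iff hP hk.2).2 hk.1

end BlockCheck

def SideCheck (d : ℕ) (cX cY : SFTCode) (r k : ℕ) (tF tG : List ℕ) : Prop :=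
  codeRadius cY + 2 * r ≤ k ∧
    BlockCheck d cX (TransferAt cY (tableRule d r cX.1 tF) (tableRule d r cY.1 tG)) k

/-- The witness `w = (r, k, tF, tG)` gives the radius `r` and the tables of the two local
rules, and the radius `k` of the blocks on which they are checked. -/
def ConjCheck (d : ℕ) (c : SFTCode × SFTCode) (w : ℕ × ℕ × List ℕ × List ℕ) : Prop :=
  SideCheck d c.1 c.2 w.1 w.2.1 w.2.2.1 w.2.2.2 ∧ SideCheck d c.2 c.1 w.1 w.2.1 w.2.2.2 w.2.2.1

section SideCheck

variable {cX cY : SFTCode} {r k : ℕ} {tF tG : List ℕ}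

theorem SideCheck.forall_transferAt (h : SideCheck d cX cY r k tF tG) :
    ∀ x ∈ codeSFT d cX, TransferAt cY (tableRule d r cX.1 tF) (tableRule d r cY.1 tG) x :=
  h.2.forall_codeSFT (isLocal_transferAt cY (isLocal_tableRule r _ _) (isLocal_tableRule r _ _))
    h.1

theorem eventually_sideCheck
    (h : ∀ x ∈ codeSFT d cX, TransferAt cY (tableRule d r cX.1 tF) (tableRule d r cY.1 tG) x) :
    ∀ᶠ k in atTop, SideCheck d cX cY r k tF tG :=
  (eventually_ge_atTop _).and <| eventually_blockCheck
    (isLocal_transferAt cY (isLocal_tableRule r _ _) (isLocal_tableRule r _ _)) h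

end SideCheck

theorem conj_iff_exists_conjCheck (c : SFTCode × SFTCode) :
    Conj (codeSFT d c.1) (codeSFT d c.2) ↔ ∃ w, ConjCheck d c w := by
  rw [conj_codeSFT_iff_tables]
  constructor
  · rintro ⟨r, tF, tG, hX, hY⟩
    obtain ⟨k, hkX, hkY⟩ := ((eventually_sideCheck hX).and (eventually_sideCheck hY)).exists
    exact ⟨(r, k, tF, tG), hkX, hkY⟩
  · rintro ⟨⟨r, k, tF, tG⟩, hX, hY⟩
    exact ⟨r, tF, tG, hX.forall_transferAt, hY.forall_transferAt⟩

/-! ### The check is primitive recursive -/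

theorem forall_mem_supp_decodePattern {pc : PatternCode} {P : Zd d → Prop} :
    (∀ v ∈ (decodePattern d pc).supp, P v) ↔ ∀ e ∈ pc, P (decodePos d e.1) := by
  simp only [mem_supp_decodePattern, forall_exists_index, and_imp]
  exact ⟨fun h e he => h _ e he rfl, fun h _ e he hv => hv ▸ h e he⟩

theorem locallyIn_iff {c : SFTCode} {y : Config d ℕ} :
    LocallyIn c y ↔ y 0 < c.1 ∧ ∀ pc ∈ c.2,
      ¬ ∀ e ∈ pc, y (decodePos d e.1) = (decodePattern d pc).val (decodePos d e.1) := by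
  simp only [LocallyIn, Pattern.OccursAt, forall_mem_supp_decodePattern, zero_add]

theorem admissible_blockPattern_iff {c : SFTCode} {k : ℕ} {b : List ℕ} :
    Admissible (forbidden d c) (blockPattern d k b) ↔
      ∀ z ∈ boxList d (k + codeRadius c), ∀ pc ∈ c.2, ¬ ∀ e ∈ pc,
        z + decodePos d e.1 ∈ boxList d k ∧
          blockConfig d k b (z + decodePos d e.1) = (decodePattern d pc).val (decodePos d e.1) := by
  have hF : ∀ q ∈ forbidden d c, q.supp ⊆ ball d (codeRadius c) := by
    rintro _ ⟨pc, hpc, rfl⟩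
    exact supp_decodePattern_subset hpc
  rw [admissible_iff_forall_mem_ball hF subset_rfl]
  simp only [mem_boxList, forbidden, Set.mem_ofPred_eq, forall_exists_index, and_imp,
    forall_apply_eq_imp_iff₂, Pattern.OccursIn, forall_mem_supp_decodePattern, blockPattern]

theorem primrec_codeRadius : Primrec codeRadius :=
  (list_foldr (list_flatMap snd (list_flatMap snd (list_map (fst.comp snd)
      (int_natAbs.comp₂ Primrec₂.right)).to₂).to₂) (const 0)
    (nat_add.comp₂ (fst.comp₂ Primrec₂.right) (snd.comp₂ Primrec₂.right))).of_eq fun _ => rfl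

theorem primrec_decodePattern_val : Primrec₂ fun (pc : PatternCode) (v : Zd d) =>
    (decodePattern d pc).val v := by
  have hR : PrimrecRel fun (e : List ℤ × ℕ) (v : Zd d) => decodePos d e.1 = v :=
    Primrec.eq.comp₂ ((primrec_decodePos d).comp₂ (fst.comp₂ Primrec₂.left)) Primrec₂.right
  refine (option_getD.comp (option_map (list_head?.comp hR.listFilter) (snd.comp snd).to₂)
    (const 0)).of_eq fun p => ?_
  simp [decodePattern, ← List.head?_filter]

section Primrec

variable {α : Type} [Primcodable α]

theorem primrec_blockConfig {k : α → ℕ} {b : α → List ℕ} {z : α → Zd d} (hk : Primrec k)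
    (hb : Primrec b) (hz : Primrec z) : Primrec fun a => blockConfig d (k a) (b a) (z a) :=
  (list_getD 0).comp hb (list_idxOf.comp hz ((primrec_boxList d).comp hk))

theorem primrec_tableRule {r n : α → ℕ} {t : α → List ℕ} {y : α → Config d ℕ} (hr : Primrec r)
    (hn : Primrec n) (ht : Primrec t) (hy : Primrec₂ y) :
    Primrec fun a => tableRule d (r a) (n a) (t a) (y a) := by
  have := (list_getD 0).comp ht (list_idxOf.comp (list_map ((primrec_boxList d).comp hr) hy)
    (primrec_words.comp hn (list_length.comp ((primrec_boxList d).comp hr))))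
  exact this.of_eq fun a => by rw [tableRule, window]; congr 2; exact lawful_beq_subsingleton _ _

theorem primrecPred_locallyIn {c : α → SFTCode} {y : α → Config d ℕ} (hc : Primrec c)
    (hy : Primrec₂ y) : PrimrecPred fun a => LocallyIn (c a) (y a) :=
  ((nat_lt.comp (hy.comp Primrec.id (const 0)) (fst.comp hc)).and
    (PrimrecPred.forall_mem (snd.comp hc) (PrimrecPred.forall_mem snd
      (Primrec.eq.comp (hy.comp (fst.comp fst) ((primrec_decodePos d).comp (fst.comp snd)))
        (primrec_decodePattern_val.comp (snd.comp fst)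
          ((primrec_decodePos d).comp (fst.comp snd))))).not)).of_eq fun _ => locallyIn_iff.symm

theorem primrecPred_transferAt {c : α → SFTCode} {r n m : α → ℕ} {tF tG : α → List ℕ}
    {y : α → Config d ℕ} (hc : Primrec c) (hr : Primrec r) (hn : Primrec n) (hm : Primrec m)
    (htF : Primrec tF) (htG : Primrec tG) (hy : Primrec₂ y) :
    PrimrecPred fun a => TransferAt (c a) (tableRule d (r a) (n a) (tF a))
      (tableRule d (r a) (m a) (tG a)) (y a) := by
  have hfy : Primrec₂ fun a => sliding (tableRule d (r a) (n a) (tF a)) (y a) :=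
    primrec_tableRule (hr.comp fst) (hn.comp fst) (htF.comp fst)
      (hy.comp (fst.comp fst) (pi_int_add.comp (snd.comp fst) snd))
  exact (primrecPred_locallyIn hc hfy).and
    (Primrec.eq.comp (primrec_tableRule hr hm htG hfy) (hy.comp Primrec.id (const 0)))

theorem primrecPred_admissible_blockPattern {c : α → SFTCode} {k : α → ℕ} {b : α → List ℕ}
    (hc : Primrec c) (hk : Primrec k) (hb : Primrec b) :
    PrimrecPred fun a => Admissible (forbidden d (c a)) (blockPattern d (k a) (b a)) := by
  have hpos : Primrec fun q : ((α × Zd d) × PatternCode) × (List ℤ × ℕ) =>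
      q.1.1.2 + decodePos d q.2.1 :=
    pi_int_add.comp (snd.comp (fst.comp fst)) ((primrec_decodePos d).comp (fst.comp snd))
  have ha : Primrec fun q : ((α × Zd d) × PatternCode) × (List ℤ × ℕ) => q.1.1.1 :=
    fst.comp (fst.comp fst)
  refine (PrimrecPred.forall_mem ((primrec_boxList d).comp (nat_add.comp hk
    (primrec_codeRadius.comp hc))) (PrimrecPred.forall_mem (snd.comp (hc.comp fst))
      (PrimrecPred.forall_mem snd ((list_mem.comp hpos ((primrec_boxList d).comp (hk.comp ha))).and
        (Primrec.eq.comp (primrec_blockConfig (hk.comp ha) (hb.comp ha) hpos)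
          (primrec_decodePattern_val.comp (snd.comp fst)
            ((primrec_decodePos d).comp (fst.comp snd)))))).not)).of_eq
    fun a => (admissible_blockPattern_iff (c := c a) (k := k a) (b := b a)).symm

theorem primrecPred_sideCheck {cX cY : α → SFTCode} {r k : α → ℕ} {tF tG : α → List ℕ}
    (hcX : Primrec cX) (hcY : Primrec cY) (hr : Primrec r) (hk : Primrec k) (htF : Primrec tF)
    (htG : Primrec tG) :
    PrimrecPred fun a => SideCheck d (cX a) (cY a) (r a) (k a) (tF a) (tG a) := by
  have hblock : Primrec₂ fun (p : α × List ℕ) => blockConfig d (k p.1) p.2 :=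
    primrec_blockConfig (hk.comp (fst.comp fst)) (snd.comp fst) snd
  refine (nat_le.comp (nat_add.comp (primrec_codeRadius.comp hcY) (nat_mul.comp (const 2) hr))
    hk).and ?_
  exact
    PrimrecPred.forall_mem (primrec_words.comp (fst.comp hcX)
      (list_length.comp ((primrec_boxList d).comp hk))) <|
    (primrecPred_admissible_blockPattern (hcX.comp fst) (hk.comp fst) snd).imp <|
    primrecPred_transferAt (hcY.comp fst) (hr.comp fst) (fst.comp (hcX.comp fst))
      (fst.comp (hcY.comp fst)) (htF.comp fst) (htG.comp fst) hblock

end Primrec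

theorem primrecRel_conjCheck (d : ℕ) : PrimrecRel (ConjCheck d) :=
  (primrecPred_sideCheck (fst.comp fst) (snd.comp fst) (fst.comp snd) (fst.comp (snd.comp snd))
    (fst.comp (snd.comp (snd.comp snd))) (snd.comp (snd.comp (snd.comp snd)))).and
  (primrecPred_sideCheck (snd.comp fst) (fst.comp fst) (fst.comp snd) (fst.comp (snd.comp snd))
    (snd.comp (snd.comp (snd.comp snd))) (fst.comp (snd.comp (snd.comp snd))))

theorem stmt9_general (d : ℕ) :
    Sigma01 {c : SFTCode × SFTCode | Conj (codeSFT d c.1) (codeSFT d c.2)} :=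
  sigma01_of_primrecRel (primrecRel_conjCheck d) conj_iff_exists_conjCheck

/-- Conjugacy of two `d`-dimensional SFTs, given by codes, is `Σ⁰₁`. -/
theorem stmt9 (d : ℕ) (hd : 1 ≤ d) :
    Sigma01 {c : SFTCode × SFTCode | Conj (codeSFT d c.1) (codeSFT d c.2)} :=
  stmt9_general d
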